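/- arXiv:1312.1652 — 2 statements merged into one kernel-verified Lean document; each statement's English description precedes it below -/
import Mathlib

section
/- Fractional Nash inequality: there exists C > 0 (depending on d and α) such that for every g ∈ L¹(ℝ^d) with finite Gagliardo seminorm of order α/2, one has ∫_{ℝ^d} |g(x)|² dx ≤ C (∫_{ℝ^d} |g(x)| dx)^{2α/(d+α)} (∫_{ℝ^d} ∫_{ℝ^d} |g(x)-g(y)|²/|x-y|^{d+α} dy dx)^{d/(d+α)}. -/
/-!
For `r > 0`, integrate `g(x)² + g(y)² ≤ |g x - g y|² + 2 |g x| |g y|` over the pairs with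
`‖x - y‖ < r`. There `|g x - g y|² ≤ r^(d+α) |g x - g y|² / ‖x - y‖^(d+α)`, and the pairs with
first coordinate `x` form a ball of volume `r^d |B₁|`; this gives
`|B₁| ‖g‖₂² ≤ [g]² r^α / 2 + ‖g‖₁² r^(-d)`. Balancing the two terms, `r^(d+α) ≍ ‖g‖₁² / [g]²`,
gives the inequality.
-/

open MeasureTheory Real Set Metric Module

section Optimization

variable {a b p q : ℝ}

theorem exists_pos_mul_rpow_add_div_rpow_eq (hp : 0 < p) (hq : 0 ≤ q) (ha : 0 < a) (hb : 0 < b) :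
    ∃ r > 0, a * r ^ p + b / r ^ q = 2 * a ^ (q / (q + p)) * b ^ (p / (q + p)) := by
  have hqp : 0 < q + p := by positivity
  have hba : 0 < b / a := div_pos hb ha
  have hsplit : ∀ c > (0 : ℝ), c = c ^ (q / (q + p)) * c ^ (p / (q + p)) := fun c hc => by
    rw [← rpow_add hc, ← add_div, div_self hqp.ne', rpow_one]
  refine ⟨(b / a) ^ (q + p)⁻¹, rpow_pos_of_pos hba _, ?_⟩
  rw [← rpow_mul hba.le, ← rpow_mul hba.le, inv_mul_eq_div, inv_mul_eq_div, div_rpow hb.le ha.le,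
    div_rpow hb.le ha.le]
  nth_rewrite 1 [hsplit a ha]
  nth_rewrite 2 [hsplit b hb]
  field_simp
  ring

theorem le_two_mul_rpow_mul_rpow_of_forall_le {X : ℝ} (hp : 0 < p) (hq : 0 ≤ q) (ha : 0 ≤ a)
    (hb : 0 ≤ b) (h : ∀ r > 0, X ≤ a * r ^ p + b / r ^ q) :
    X ≤ 2 * a ^ (q / (q + p)) * b ^ (p / (q + p)) := by
  -- For `a = 0` or `b = 0` no `r` balances the two terms; perturb both to positive values.
  have hperturbed : ∀ ε > 0, X ≤ 2 * (a + ε) ^ (q / (q + p)) * (b + ε) ^ (p / (q + p)) := by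
    intro ε hε
    obtain ⟨r, hr, hr_eq⟩ :=
      exists_pos_mul_rpow_add_div_rpow_eq hp hq (a := a + ε) (b := b + ε) (by linarith)
        (by linarith)
    calc X ≤ a * r ^ p + b / r ^ q := h r hr
      _ ≤ (a + ε) * r ^ p + (b + ε) / r ^ q := by gcongr <;> linarith
      _ = _ := hr_eq
  have hcont : Continuous fun ε : ℝ => 2 * (a + ε) ^ (q / (q + p)) * (b + ε) ^ (p / (q + p)) :=
    (continuous_const.mul
      ((continuous_rpow_const (by positivity)).comp (continuous_const_add a))).mul
        ((continuous_rpow_const (by positivity)).comp (continuous_const_add b))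
  have hlim := (hcont.tendsto 0).mono_left (nhdsWithin_le_nhds (s := Ioi 0))
  simp only [add_zero] at hlim
  exact ge_of_tendsto hlim (eventually_nhdsWithin_of_forall hperturbed)

end Optimization

section NearDiagonal

variable {E : Type*} [NormedAddCommGroup E]

theorem indicator_dist_lt_apply {F : Type*} [Zero F] (f : E × E → F) (r : ℝ) (x y : E) :
    {p : E × E | dist p.1 p.2 < r}.indicator f (x, y) =
      (ball x r).indicator (fun y => f (x, y)) y := by
  simp [indicator, dist_comm]

theorem indicator_dist_lt_comp_swap {F : Type*} [Zero F] (f : E × E → F) (r : ℝ) :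
    {p : E × E | dist p.1 p.2 < r}.indicator f ∘ Prod.swap =
      {p : E × E | dist p.1 p.2 < r}.indicator (f ∘ Prod.swap) := by
  ext p
  simp [indicator, dist_comm]

theorem indicator_dist_lt_sq_add_sq_le {r s : ℝ} (hr : 0 ≤ r) (hs : 0 ≤ s) (g : E → ℝ) (p : E × E) :
    {p : E × E | dist p.1 p.2 < r}.indicator (fun p => g p.1 ^ 2 + g p.2 ^ 2) p ≤
      r ^ s * (|g p.1 - g p.2| ^ 2 / ‖p.1 - p.2‖ ^ s) + 2 * (|g p.1| * |g p.2|) := by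
  by_cases hp : p ∈ {p : E × E | dist p.1 p.2 < r}
  · rw [indicator_of_mem hp]
    have hpolar : g p.1 ^ 2 + g p.2 ^ 2 ≤ |g p.1 - g p.2| ^ 2 + 2 * (|g p.1| * |g p.2|) := by
      rw [sq_abs, ← abs_mul]
      nlinarith [le_abs_self (g p.1 * g p.2)]
    suffices |g p.1 - g p.2| ^ 2 ≤ r ^ s * (|g p.1 - g p.2| ^ 2 / ‖p.1 - p.2‖ ^ s) by linarith
    rcases eq_or_ne p.1 p.2 with heq | hne
    · simp [heq]
    have hpos : 0 < ‖p.1 - p.2‖ ^ s := rpow_pos_of_pos (norm_pos_iff.2 (sub_ne_zero.2 hne)) s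
    have hle : ‖p.1 - p.2‖ ^ s ≤ r ^ s :=
      rpow_le_rpow (norm_nonneg _) (by rw [← dist_eq_norm]; exact hp.le) hs
    rw [mul_div_left_comm]
    exact le_mul_of_one_le_right (sq_nonneg _) ((one_le_div hpos).2 hle)
  · rw [indicator_of_notMem hp]
    positivity

end NearDiagonal

section Haar

variable {E : Type*} [NormedAddCommGroup E] [NormedSpace ℝ E] [FiniteDimensional ℝ E]
  [MeasurableSpace E] [BorelSpace E] {μ : Measure E} [μ.IsAddHaarMeasure] {g : E → ℝ}

theorem integrable_indicator_dist_lt_sq (hg : MemLp g 2 μ) (r : ℝ) :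
    Integrable ({p : E × E | dist p.1 p.2 < r}.indicator fun p => g p.1 ^ 2) (μ.prod μ) := by
  have hS : MeasurableSet {p : E × E | dist p.1 p.2 < r} :=
    measurableSet_lt (continuous_fst.dist continuous_snd).measurable measurable_const
  have hmeas : AEStronglyMeasurable (fun p : E × E => g p.1 ^ 2) (μ.prod μ) :=
    (hg.aestronglyMeasurable.comp_quasiMeasurePreserving
      Measure.quasiMeasurePreserving_fst).pow 2
  refine (integrable_prod_iff (hmeas.indicator hS)).2 ⟨.of_forall fun x => ?_, ?_⟩
  · simp_rw [indicator_dist_lt_apply]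
    exact (integrableOn_const measure_ball_lt_top.ne).integrable_indicator measurableSet_ball
  · simp_rw [indicator_dist_lt_apply, norm_indicator_eq_indicator_norm,
      integral_indicator_const _ measurableSet_ball]
    simpa [Measure.addHaar_real_ball_center] using hg.integrable_sq.const_mul (μ.real (ball 0 r))

theorem integral_indicator_dist_lt_sq (hg : MemLp g 2 μ) (r : ℝ) :
    ∫ p, {p : E × E | dist p.1 p.2 < r}.indicator (fun p => g p.1 ^ 2) p ∂(μ.prod μ) =
      μ.real (ball 0 r) * ∫ x, g x ^ 2 ∂μ := by
  rw [integral_prod _ (integrable_indicator_dist_lt_sq hg r), ← integral_const_mul]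
  simp_rw [indicator_dist_lt_apply, integral_indicator_const _ measurableSet_ball,
    Measure.addHaar_real_ball_center, smul_eq_mul]

theorem two_mul_measureReal_ball_mul_integral_sq_le (hg₁ : Integrable g μ) (hg₂ : MemLp g 2 μ)
    {s : ℝ} (hs : 0 ≤ s)
    (hF : Integrable (fun p : E × E => |g p.1 - g p.2| ^ 2 / ‖p.1 - p.2‖ ^ s) (μ.prod μ))
    {r : ℝ} (hr : 0 ≤ r) :
    2 * (μ.real (ball 0 r) * ∫ x, g x ^ 2 ∂μ) ≤
      r ^ s * ∫ p, |g p.1 - g p.2| ^ 2 / ‖p.1 - p.2‖ ^ s ∂(μ.prod μ) +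
        2 * (∫ x, |g x| ∂μ) ^ 2 := by
  set S := {p : E × E | dist p.1 p.2 < r}
  have hfst := integrable_indicator_dist_lt_sq hg₂ r
  have hswap : (S.indicator fun p => g p.1 ^ 2) ∘ Prod.swap = S.indicator fun p => g p.2 ^ 2 :=
    indicator_dist_lt_comp_swap _ r
  have hsnd : Integrable (S.indicator fun p => g p.2 ^ 2) (μ.prod μ) := hswap ▸ hfst.swap
  have hprod : Integrable (fun p : E × E => |g p.1| * |g p.2|) (μ.prod μ) :=
    hg₁.abs.mul_prod hg₁.abs
  calc 2 * (μ.real (ball 0 r) * ∫ x, g x ^ 2 ∂μ)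
      = ∫ p, S.indicator (fun p => g p.1 ^ 2 + g p.2 ^ 2) p ∂(μ.prod μ) := by
        rw [indicator_add, integral_add hfst hsnd, ← hswap, Function.comp_def, integral_prod_swap,
          integral_indicator_dist_lt_sq hg₂]
        ring
    _ ≤ ∫ p, (r ^ s * (|g p.1 - g p.2| ^ 2 / ‖p.1 - p.2‖ ^ s) + 2 * (|g p.1| * |g p.2|))
          ∂(μ.prod μ) :=
        integral_mono (by rw [indicator_add]; exact hfst.add hsnd)
          ((hF.const_mul _).add (hprod.const_mul 2)) (indicator_dist_lt_sq_add_sq_le hr hs g)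
    _ = _ := by
        rw [integral_add (hF.const_mul _) (hprod.const_mul 2), integral_const_mul,
          integral_const_mul, integral_prod_mul (fun x => |g x|) (fun x => |g x|)]
        ring

theorem measureReal_ball_one_mul_integral_sq_le (hg₁ : Integrable g μ) (hg₂ : MemLp g 2 μ)
    {d : ℕ} (hd : finrank ℝ E = d) {α : ℝ} (hα : 0 ≤ α)
    (hF : Integrable (fun p : E × E => |g p.1 - g p.2| ^ 2 / ‖p.1 - p.2‖ ^ ((d : ℝ) + α))
      (μ.prod μ))
    {r : ℝ} (hr : 0 < r) :
    μ.real (ball 0 1) * ∫ x, g x ^ 2 ∂μ ≤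
      (∫ p, |g p.1 - g p.2| ^ 2 / ‖p.1 - p.2‖ ^ ((d : ℝ) + α) ∂(μ.prod μ)) / 2 * r ^ α +
        (∫ x, |g x| ∂μ) ^ 2 / r ^ (d : ℝ) := by
  have h := two_mul_measureReal_ball_mul_integral_sq_le hg₁ hg₂ (by positivity) hF hr.le
  have hball : μ.real (ball 0 r) = r ^ (d : ℝ) * μ.real (ball 0 1) := by
    rw [measureReal_def, Measure.addHaar_ball_of_pos μ _ hr, ENNReal.toReal_mul,
      ENNReal.toReal_ofReal (by positivity), hd, rpow_natCast, measureReal_def]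
  rw [hball, rpow_add hr] at h
  have hrd : 0 < r ^ (d : ℝ) := rpow_pos_of_pos hr _
  rw [div_mul_eq_mul_div, div_add_div _ _ two_ne_zero hrd.ne', le_div_iff₀ (by positivity)]
  linarith

end Haar

theorem stmt6_general (d : ℕ) (α : ℝ) (hα : α ∈ Set.Ioo (0:ℝ) 2) :
    ∃ C > (0 : ℝ), ∀ g : EuclideanSpace ℝ (Fin d) → ℝ,
      Integrable g → MemLp g 2 (volume : Measure (EuclideanSpace ℝ (Fin d))) →
      Integrable (fun p : EuclideanSpace ℝ (Fin d) × EuclideanSpace ℝ (Fin d) =>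
        |g p.1 - g p.2| ^ 2 / ‖p.1 - p.2‖ ^ ((d : ℝ) + α)) →
      (∫ x, |g x| ^ 2) ≤
        C * (∫ x, |g x|) ^ (2 * α / ((d : ℝ) + α)) *
          (∫ x, ∫ y, |g x - g y| ^ 2 / ‖x - y‖ ^ ((d : ℝ) + α)) ^ ((d : ℝ) / ((d : ℝ) + α)) := by
  set c := (volume : Measure (EuclideanSpace ℝ (Fin d))).real (ball 0 1)
  have hc : 0 < c := ENNReal.toReal_pos (measure_ball_pos _ _ one_pos).ne' measure_ball_lt_top.ne
  set θ := (d : ℝ) / (d + α)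
  refine ⟨2 / (2 ^ θ * c), by positivity, fun g hg₁ hg₂ hF => ?_⟩
  set J := ∫ p, |g p.1 - g p.2| ^ 2 / ‖p.1 - p.2‖ ^ ((d : ℝ) + α) ∂(volume.prod volume)
  set A := ∫ x, |g x|
  have hJ : 0 ≤ J := integral_nonneg fun p => by positivity
  have hA : 0 ≤ A := integral_nonneg fun x => abs_nonneg _
  have hbound : c * ∫ x, g x ^ 2 ≤ 2 * (J / 2) ^ θ * (A ^ 2) ^ (α / (d + α)) :=
    le_two_mul_rpow_mul_rpow_of_forall_le hα.1 d.cast_nonneg (by positivity) (sq_nonneg A)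
      fun _ hr =>
        measureReal_ball_one_mul_integral_sq_le hg₁ hg₂ finrank_euclideanSpace_fin hα.1.le hF hr
  have hApow : (A ^ 2) ^ (α / (d + α)) = A ^ (2 * α / (d + α)) := by
    rw [← rpow_natCast, ← rpow_mul hA]
    push_cast
    ring_nf
  rw [div_rpow hJ zero_le_two, hApow] at hbound
  have hsq : ∫ x, |g x| ^ 2 = ∫ x, g x ^ 2 := by simp_rw [sq_abs]
  rw [hsq, integral_integral (f := fun x y => |g x - g y| ^ 2 / ‖x - y‖ ^ ((d : ℝ) + α)) hF]
  rw [div_mul_eq_mul_div, div_mul_eq_mul_div, le_div_iff₀ (by positivity)]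
  field_simp at hbound
  linarith

theorem stmt6 (d : ℕ) (hd : 1 ≤ d) (α : ℝ) (hα : α ∈ Set.Ioo (0:ℝ) 2) :
    ∃ C > (0 : ℝ), ∀ g : EuclideanSpace ℝ (Fin d) → ℝ,
      Integrable g → MemLp g 2 (volume : Measure (EuclideanSpace ℝ (Fin d))) →
      Integrable (fun p : EuclideanSpace ℝ (Fin d) × EuclideanSpace ℝ (Fin d) =>
        |g p.1 - g p.2| ^ 2 / ‖p.1 - p.2‖ ^ ((d : ℝ) + α)) →
      (∫ x, |g x| ^ 2) ≤
        C * (∫ x, |g x|) ^ (2 * α / ((d : ℝ) + α)) *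
          (∫ x, ∫ y, |g x - g y| ^ 2 / ‖x - y‖ ^ ((d : ℝ) + α)) ^ ((d : ℝ) / ((d : ℝ) + α)) :=
  stmt6_general d α hα
end

section
/- Weighted L² coercivity splitting: let m₀(x) = (1+|x|²)^{k₀/2} with 0 < k₀ < 1, α ∈ (0,2), and f : ℝ^d → ℝ measurable with finite weighted Gagliardo seminorm. Then ∫∫_{|x-y|≤1} |f(x)-f(y)|²/|x-y|^{d+α} m₀²(x) dy dx ≥ (1/2) ∫∫_{ℝ^d×ℝ^d} |f(x)m₀(x)-f(y)m₀(y)|²/|x-y|^{d+α} dy dx - C ∫ f² m₀², for a constant C depending only on d, α, k₀. -/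
open MeasureTheory Real Set

/-!
With `m x = (1 + ‖x‖ ^ 2) ^ (k₀ / 2)`, write
`f x m x - f y m y = (f x - f y) m x + f y (m x - m y)`.
Since `m ≥ 1` and `m` is `1`-Lipschitz (this is where `k₀ ≤ 1` enters), the square of this
difference is at most `2 (f x - f y)² m(x)²` on `‖x - y‖ ≤ 1`, plus
`2 (f(x)² m(x)² + f(y)² m(y)²) min 1 ‖x - y‖²` everywhere. After division by `‖x - y‖ ^ (d + α)`
the second term is a convolution of `f² m²` with the kernel `min 1 ‖z‖² / ‖z‖ ^ (d + α)`, which is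
integrable exactly because `0 < α < 2`.
-/

section LevyKernel

variable {E : Type*} [NormedAddCommGroup E]

noncomputable def levyKernel (r : ℝ) (z : E) : ℝ := min 1 (‖z‖ ^ 2) / ‖z‖ ^ r

lemma levyKernel_nonneg (r : ℝ) (z : E) : 0 ≤ levyKernel r z := by
  unfold levyKernel; positivity

lemma levyKernel_neg (r : ℝ) (z : E) : levyKernel r (-z) = levyKernel r z := by
  simp only [levyKernel, norm_neg]

lemma levyKernel_le_rpow (r : ℝ) (z : E) : levyKernel r z ≤ ‖z‖ ^ (2 - r) := by
  rcases eq_or_ne z 0 with rfl | hz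
  · simpa [levyKernel] using Real.rpow_nonneg le_rfl _
  have hpos : 0 < ‖z‖ := norm_pos_iff.2 hz
  calc levyKernel r z ≤ ‖z‖ ^ 2 / ‖z‖ ^ r := by
        unfold levyKernel; gcongr; exact min_le_right _ _
    _ = ‖z‖ ^ (2 - r) := by rw [Real.rpow_sub hpos, Real.rpow_two]

lemma levyKernel_of_one_lt_norm (r : ℝ) {z : E} (hz : 1 < ‖z‖) : levyKernel r z = 1 / ‖z‖ ^ r := by
  rw [levyKernel, min_eq_left (by nlinarith)]

variable [NormedSpace ℝ E] [FiniteDimensional ℝ E] [MeasurableSpace E] [BorelSpace E]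
  {μ : Measure E} [μ.IsAddHaarMeasure]

lemma integrable_levyKernel (hd : 1 ≤ Module.finrank ℝ E) {r : ℝ}
    (hr : (Module.finrank ℝ E : ℝ) < r) (hr' : r < Module.finrank ℝ E + 2) :
    Integrable (levyKernel r) μ := by
  have hmeas : AEStronglyMeasurable (levyKernel r) μ :=
    Measurable.aestronglyMeasurable (by unfold levyKernel; fun_prop)
  have hball : IntegrableOn (levyKernel r) (Metric.closedBall 0 1) μ := by
    refine (locallyIntegrable_of_norm_le_rpow hd (C := 1) (α := r - 2) (by linarith)
      (ae_of_all _ fun z => ?_) hmeas).integrableOn_isCompact (isCompact_closedBall 0 1)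
    rw [Real.norm_of_nonneg (levyKernel_nonneg r z), one_mul, neg_sub]
    exact levyKernel_le_rpow r z
  have hfar : IntegrableOn (levyKernel r) (Metric.closedBall 0 1)ᶜ μ := by
    refine (((integrable_one_add_norm hr).const_mul (2 ^ r)).integrableOn).mono' hmeas.restrict
      (ae_restrict_of_forall_mem measurableSet_closedBall.compl fun z hz => ?_)
    have hz : 1 < ‖z‖ := by simpa using hz
    rw [Real.norm_of_nonneg (levyKernel_nonneg r z), levyKernel_of_one_lt_norm r hz,
      Real.rpow_neg (by positivity), ← div_eq_mul_inv,
      ← Real.div_rpow (by norm_num) (by positivity), one_div, ← Real.inv_rpow (by positivity)]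
    refine Real.rpow_le_rpow (by positivity) ?_ ((Nat.cast_nonneg _).trans hr.le)
    rw [inv_eq_one_div, div_le_div_iff₀ (by positivity) (by positivity)]
    linarith
  simpa using hball.union hfar

end LevyKernel

lemma lipschitzWith_one_add_sq_rpow_half {k : ℝ} (hk0 : 0 ≤ k) (hk1 : k ≤ 1) :
    LipschitzWith 1 (fun t : ℝ => (1 + t ^ 2) ^ (k / 2)) := by
  have hderiv (t : ℝ) : HasDerivAt (fun t : ℝ => (1 + t ^ 2) ^ (k / 2))
      (k * (t * (1 + t ^ 2) ^ (k / 2 - 1))) t := by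
    convert ((hasDerivAt_pow 2 t).const_add 1).rpow_const (p := k / 2) (Or.inl (by positivity))
      using 1
    push_cast; ring
  refine lipschitzWith_of_nnnorm_deriv_le (fun t => (hderiv t).differentiableAt) fun t => ?_
  have hpos : 0 < 1 + t ^ 2 := by positivity
  have habs : |t| ≤ (1 + t ^ 2) ^ (1 / 2 : ℝ) := by
    rw [← Real.sqrt_eq_rpow]; exact Real.abs_le_sqrt (by linarith)
  have hpow : (1 + t ^ 2) ^ (k / 2 - 1) ≤ (1 + t ^ 2) ^ (-(1 / 2) : ℝ) :=
    Real.rpow_le_rpow_of_exponent_le (by nlinarith) (by linarith)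
  rw [(hderiv t).deriv, ← NNReal.coe_le_coe, coe_nnnorm, NNReal.coe_one, Real.norm_eq_abs,
    abs_mul, abs_mul, abs_of_nonneg hk0, abs_of_nonneg (Real.rpow_nonneg hpos.le _)]
  calc k * (|t| * (1 + t ^ 2) ^ (k / 2 - 1))
      ≤ 1 * ((1 + t ^ 2) ^ (1 / 2 : ℝ) * (1 + t ^ 2) ^ (-(1 / 2) : ℝ)) := by gcongr
    _ = 1 := by rw [← Real.rpow_add hpos]; norm_num

lemma abs_one_add_norm_sq_rpow_half_sub_le {E : Type*} [SeminormedAddCommGroup E] {k : ℝ}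
    (hk0 : 0 ≤ k) (hk1 : k ≤ 1) (x y : E) :
    |(1 + ‖x‖ ^ 2) ^ (k / 2) - (1 + ‖y‖ ^ 2) ^ (k / 2)| ≤ ‖x - y‖ := by
  simpa [Real.dist_eq, dist_eq_norm] using
    ((lipschitzWith_one_add_sq_rpow_half hk0 hk1).comp lipschitzWith_one_norm).dist_le_mul x y

lemma sq_sub_weighted_div_rpow_le {E : Type*} [NormedAddCommGroup E] (f : E → ℝ) {k : ℝ}
    (hk0 : 0 ≤ k) (hk1 : k ≤ 1) (r : ℝ) (x y : E) :
    (f x * (1 + ‖x‖ ^ 2) ^ (k / 2) - f y * (1 + ‖y‖ ^ 2) ^ (k / 2)) ^ 2 / ‖x - y‖ ^ r ≤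
      2 * {p : E × E | ‖p.1 - p.2‖ ≤ 1}.indicator
          (fun p => (f p.1 - f p.2) ^ 2 / ‖p.1 - p.2‖ ^ r * (1 + ‖p.1‖ ^ 2) ^ k) (x, y) +
        2 * ((f x ^ 2 * (1 + ‖x‖ ^ 2) ^ k + f y ^ 2 * (1 + ‖y‖ ^ 2) ^ k) *
          levyKernel r (x - y)) := by
  have hsq (z : E) : ((1 + ‖z‖ ^ 2) ^ (k / 2)) ^ 2 = (1 + ‖z‖ ^ 2) ^ k := by
    rw [← Real.rpow_natCast, ← Real.rpow_mul (by positivity)]; norm_num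
  have hv : 1 ≤ (1 + ‖y‖ ^ 2) ^ (k / 2) :=
    Real.one_le_rpow (by nlinarith [norm_nonneg y]) (by positivity)
  have huv := abs_one_add_norm_sq_rpow_half_sub_le hk0 hk1 x y
  set u := (1 + ‖x‖ ^ 2) ^ (k / 2)
  set v := (1 + ‖y‖ ^ 2) ^ (k / 2)
  have hD : 0 ≤ ‖x - y‖ ^ r := Real.rpow_nonneg (norm_nonneg _) _
  by_cases hxy : ‖x - y‖ ≤ 1
  · rw [indicator_of_mem (show (x, y) ∈ {p : E × E | ‖p.1 - p.2‖ ≤ 1} from hxy), levyKernel,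
      min_eq_right (pow_le_one₀ (norm_nonneg _) hxy), ← hsq x, ← hsq y]
    have hcorr : (f y * (u - v)) ^ 2 ≤ f y ^ 2 * v ^ 2 * ‖x - y‖ ^ 2 :=
      calc (f y * (u - v)) ^ 2 = f y ^ 2 * (u - v) ^ 2 := by ring
        _ ≤ f y ^ 2 * (v ^ 2 * ‖x - y‖ ^ 2) := by
          gcongr
          exact (sq_le_sq.2 (by rwa [abs_norm])).trans (le_mul_of_one_le_left (by positivity)
            (one_le_pow₀ hv))
        _ = f y ^ 2 * v ^ 2 * ‖x - y‖ ^ 2 := by ring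
    have hnum : (f x * u - f y * v) ^ 2 ≤
        2 * ((f x - f y) ^ 2 * u ^ 2) + 2 * ((f x ^ 2 * u ^ 2 + f y ^ 2 * v ^ 2) * ‖x - y‖ ^ 2) :=
      calc (f x * u - f y * v) ^ 2 = ((f x - f y) * u + f y * (u - v)) ^ 2 := by ring
        _ ≤ 2 * (((f x - f y) * u) ^ 2 + (f y * (u - v)) ^ 2) := add_sq_le
        _ ≤ _ := by nlinarith [mul_nonneg (sq_nonneg (f x * u)) (sq_nonneg ‖x - y‖)]
    calc _ ≤ (2 * ((f x - f y) ^ 2 * u ^ 2) +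
          2 * ((f x ^ 2 * u ^ 2 + f y ^ 2 * v ^ 2) * ‖x - y‖ ^ 2)) / ‖x - y‖ ^ r :=
          div_le_div_of_nonneg_right hnum hD
      _ = _ := by ring
  · rw [indicator_of_notMem (show (x, y) ∉ {p : E × E | ‖p.1 - p.2‖ ≤ 1} from hxy),
      levyKernel_of_one_lt_norm r (not_le.1 hxy), ← hsq x, ← hsq y]
    have hnum : (f x * u - f y * v) ^ 2 ≤ 2 * ((f x * u) ^ 2 + (f y * v) ^ 2) := by
      simpa [sub_eq_add_neg] using add_sq_le (a := f x * u) (b := -(f y * v))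
    calc _ ≤ 2 * ((f x * u) ^ 2 + (f y * v) ^ 2) / ‖x - y‖ ^ r :=
          div_le_div_of_nonneg_right hnum hD
      _ = _ := by ring

section ConvolutionIntegrand

variable {G : Type*} [NormedAddCommGroup G] {F κ : G → ℝ}

lemma mul_comp_sub_eq_comp_swap_of_even (hκ_neg : ∀ z, κ (-z) = κ z) :
    (fun p : G × G => F p.1 * κ (p.1 - p.2)) =
      (fun p : G × G => F p.2 * κ (p.1 - p.2)) ∘ Prod.swap := by
  ext p
  simp only [Function.comp_apply, Prod.fst_swap, Prod.snd_swap, ← neg_sub p.1, hκ_neg]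

variable [MeasurableSpace G] [BorelSpace G] [SecondCountableTopology G]
  {μ : Measure G} [SFinite μ] [μ.IsAddRightInvariant]

lemma integrable_mul_comp_sub (hF : Integrable F μ) (hκ : Integrable κ μ) :
    Integrable (fun p : G × G => F p.2 * κ (p.1 - p.2)) (μ.prod μ) :=
  hF.convolution_integrand (ContinuousLinearMap.mul ℝ ℝ) hκ

lemma integral_mul_comp_sub (hF : Integrable F μ) (hκ : Integrable κ μ) :
    ∫ p : G × G, F p.2 * κ (p.1 - p.2) ∂(μ.prod μ) = (∫ x, F x ∂μ) * ∫ z, κ z ∂μ := by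
  rw [integral_prod_symm _ (integrable_mul_comp_sub hF hκ)]
  simp only [integral_const_mul, integral_sub_right_eq_self, integral_mul_const]

lemma integrable_add_mul_comp_sub (hF : Integrable F μ) (hκ : Integrable κ μ)
    (hκ_neg : ∀ z, κ (-z) = κ z) :
    Integrable (fun p : G × G => (F p.1 + F p.2) * κ (p.1 - p.2)) (μ.prod μ) := by
  simp only [add_mul]
  exact (mul_comp_sub_eq_comp_swap_of_even hκ_neg ▸ (integrable_mul_comp_sub hF hκ).swap).add
    (integrable_mul_comp_sub hF hκ)

lemma integral_add_mul_comp_sub (hF : Integrable F μ) (hκ : Integrable κ μ)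
    (hκ_neg : ∀ z, κ (-z) = κ z) :
    ∫ p : G × G, (F p.1 + F p.2) * κ (p.1 - p.2) ∂(μ.prod μ) =
      2 * ((∫ x, F x ∂μ) * ∫ z, κ z ∂μ) := by
  have hswap := mul_comp_sub_eq_comp_swap_of_even (F := F) hκ_neg
  have h := integrable_mul_comp_sub hF hκ
  simp only [add_mul]
  rw [integral_add (hswap ▸ h.swap) h, hswap, Function.comp_def,
    integral_prod_swap (fun p : G × G => F p.2 * κ (p.1 - p.2)),
    integral_mul_comp_sub hF hκ, two_mul]

end ConvolutionIntegrand

lemma integral_setIntegral_preimage_prodMk {α β : Type*} [MeasurableSpace α] [MeasurableSpace β]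
    {μ : Measure α} {ν : Measure β} [SFinite μ] [SFinite ν] {s : Set (α × β)}
    (hs : MeasurableSet s) {g : α × β → ℝ} (hg : IntegrableOn g s (μ.prod ν)) :
    ∫ x, ∫ y in Prod.mk x ⁻¹' s, g (x, y) ∂ν ∂μ = ∫ p in s, g p ∂(μ.prod ν) := by
  rw [← integral_indicator hs, integral_prod _ ((integrable_indicator_iff hs).2 hg)]
  congr 1 with x
  rw [← integral_indicator (measurable_prodMk_left hs)]
  rfl

section SplittingInequality

variable {E : Type*} [NormedAddCommGroup E] [MeasurableSpace E] [BorelSpace E]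
  [SecondCountableTopology E] {μ : Measure E} [SFinite μ] [μ.IsAddRightInvariant]

lemma integral_sq_sub_weighted_div_rpow_le (f : E → ℝ) {k r : ℝ} (hk0 : 0 ≤ k) (hk1 : k ≤ 1)
    (hκ : Integrable (levyKernel r) μ)
    (hnear : IntegrableOn
      (fun p : E × E => (f p.1 - f p.2) ^ 2 / ‖p.1 - p.2‖ ^ r * (1 + ‖p.1‖ ^ 2) ^ k)
      {p : E × E | ‖p.1 - p.2‖ ≤ 1} (μ.prod μ))
    (hF : Integrable (fun x => f x ^ 2 * (1 + ‖x‖ ^ 2) ^ k) μ) :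
    ∫ p : E × E, (f p.1 * (1 + ‖p.1‖ ^ 2) ^ (k / 2) - f p.2 * (1 + ‖p.2‖ ^ 2) ^ (k / 2)) ^ 2 /
        ‖p.1 - p.2‖ ^ r ∂(μ.prod μ) ≤
      2 * ∫ p in {p : E × E | ‖p.1 - p.2‖ ≤ 1},
          (f p.1 - f p.2) ^ 2 / ‖p.1 - p.2‖ ^ r * (1 + ‖p.1‖ ^ 2) ^ k ∂(μ.prod μ) +
        4 * ((∫ x, f x ^ 2 * (1 + ‖x‖ ^ 2) ^ k ∂μ) * ∫ z, levyKernel r z ∂μ) := by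
  have hS : MeasurableSet {p : E × E | ‖p.1 - p.2‖ ≤ 1} :=
    measurableSet_le (by fun_prop) measurable_const
  have hnear' := ((integrable_indicator_iff hS).2 hnear).const_mul 2
  have htail := (integrable_add_mul_comp_sub hF hκ (levyKernel_neg r)).const_mul 2
  calc _ ≤ ∫ p : E × E, (2 * {p : E × E | ‖p.1 - p.2‖ ≤ 1}.indicator
          (fun p => (f p.1 - f p.2) ^ 2 / ‖p.1 - p.2‖ ^ r * (1 + ‖p.1‖ ^ 2) ^ k) p +
        2 * ((f p.1 ^ 2 * (1 + ‖p.1‖ ^ 2) ^ k + f p.2 ^ 2 * (1 + ‖p.2‖ ^ 2) ^ k) *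
          levyKernel r (p.1 - p.2))) ∂(μ.prod μ) :=
        integral_mono_of_nonneg (ae_of_all _ fun p => by positivity) (hnear'.add htail)
          (ae_of_all _ fun p => sq_sub_weighted_div_rpow_le f hk0 hk1 r p.1 p.2)
    _ = _ := by
      rw [integral_add hnear' htail, integral_const_mul, integral_const_mul, integral_indicator hS,
        integral_add_mul_comp_sub hF hκ (levyKernel_neg r)]
      ring

end SplittingInequality

theorem stmt17 (d : ℕ) (hd : 1 ≤ d) (α : ℝ) (hα : α ∈ Set.Ioo (0:ℝ) 2)
    (k₀ : ℝ) (hk₀ : k₀ ∈ Set.Ioo (0:ℝ) 1) :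
    ∃ C > (0 : ℝ), ∀ f : EuclideanSpace ℝ (Fin d) → ℝ, Measurable f →
      IntegrableOn
        (fun p : EuclideanSpace ℝ (Fin d) × EuclideanSpace ℝ (Fin d) =>
          (f p.1 - f p.2) ^ 2 / ‖p.1 - p.2‖ ^ ((d : ℝ) + α) * (1 + ‖p.1‖ ^ 2) ^ k₀)
        {p : EuclideanSpace ℝ (Fin d) × EuclideanSpace ℝ (Fin d) | ‖p.1 - p.2‖ ≤ 1} →
      Integrable
        (fun p : EuclideanSpace ℝ (Fin d) × EuclideanSpace ℝ (Fin d) =>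
          (f p.1 * (1 + ‖p.1‖ ^ 2) ^ (k₀ / 2) - f p.2 * (1 + ‖p.2‖ ^ 2) ^ (k₀ / 2)) ^ 2 /
            ‖p.1 - p.2‖ ^ ((d : ℝ) + α)) →
      Integrable (fun x : EuclideanSpace ℝ (Fin d) => f x ^ 2 * (1 + ‖x‖ ^ 2) ^ k₀) →
      (∫ x : EuclideanSpace ℝ (Fin d),
          (∫ y in {y : EuclideanSpace ℝ (Fin d) | ‖x - y‖ ≤ 1},
            (f x - f y) ^ 2 / ‖x - y‖ ^ ((d : ℝ) + α)) * (1 + ‖x‖ ^ 2) ^ k₀) ≥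
        (1 / 2 : ℝ) * (∫ x : EuclideanSpace ℝ (Fin d), ∫ y : EuclideanSpace ℝ (Fin d),
            (f x * (1 + ‖x‖ ^ 2) ^ (k₀ / 2) - f y * (1 + ‖y‖ ^ 2) ^ (k₀ / 2)) ^ 2 /
              ‖x - y‖ ^ ((d : ℝ) + α)) -
          C * ∫ x : EuclideanSpace ℝ (Fin d), f x ^ 2 * (1 + ‖x‖ ^ 2) ^ k₀ := by
  obtain ⟨hα0, hα2⟩ := hα
  obtain ⟨hk0, hk1⟩ := hk₀
  have hfin : Module.finrank ℝ (EuclideanSpace ℝ (Fin d)) = d := finrank_euclideanSpace_fin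
  have hκ : Integrable (levyKernel ((d : ℝ) + α)) (volume : Measure (EuclideanSpace ℝ (Fin d))) :=
    integrable_levyKernel (by rw [hfin]; exact hd) (by rw [hfin]; linarith) (by rw [hfin]; linarith)
  have hκ0 : 0 ≤ ∫ z : EuclideanSpace ℝ (Fin d), levyKernel ((d : ℝ) + α) z :=
    integral_nonneg (levyKernel_nonneg _)
  refine ⟨2 * (∫ z : EuclideanSpace ℝ (Fin d), levyKernel ((d : ℝ) + α) z) + 1, by linarith,
    fun f _ hnear hdiff hF => ?_⟩
  rw [Measure.volume_eq_prod] at hnear hdiff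
  have hbound := integral_sq_sub_weighted_div_rpow_le f hk0.le hk1.le hκ hnear hF
  have hF0 : 0 ≤ ∫ x, f x ^ 2 * (1 + ‖x‖ ^ 2) ^ k₀ := integral_nonneg fun x => by positivity
  have hLHS := integral_setIntegral_preimage_prodMk (measurableSet_le (by fun_prop)
    measurable_const) hnear
  simp only [preimage_ofPred_eq] at hLHS
  simp_rw [← integral_mul_const]
  rw [hLHS, integral_integral hdiff]
  linarith
end
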